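/- For every finite word w over A = {1,2,3}: s1(z_l(w)) = z_r(c1(w)) and s2(z_r(w)) = z_l(c2(w)); that is, s1∘z_l = z_r∘c1 and s2∘z_r = z_l∘c2 as morphisms of A*. -/
import Mathlib


/-- Letters `0, 1, 2` stand for the letters `1, 2, 3` of the paper. -/
abbrev Letter := Fin 3

/-- A finite word over the alphabet `{1,2,3}`. -/
abbrev Word := List Letter

/-- Apply a substitution (given by its values on letters) to a finite word. -/
def applySub (σ : Letter → Word) (w : Word) : Word := (w.map σ).flatten

/-- The substitution `z_l : 1 ↦ 12, 2 ↦ 123, 3 ↦ 13`. -/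
def zl : Letter → Word := ![[0, 1], [0, 1, 2], [0, 2]]

/-- The substitution `z_r : 1 ↦ 21, 2 ↦ 231, 3 ↦ 31`. -/
def zr : Letter → Word := ![[1, 0], [1, 2, 0], [2, 0]]

/-- The substitution `c₁ : 1 ↦ 1, 2 ↦ 13, 3 ↦ 2`. -/
def c1 : Letter → Word := ![[0], [0, 2], [1]]

/-- The substitution `c₂ : 1 ↦ 2, 2 ↦ 13, 3 ↦ 3`. -/
def c2 : Letter → Word := ![[1], [0, 2], [2]]

/-- The Selmer substitution `s₁ : 1 ↦ 2, 2 ↦ 1, 3 ↦ 31`. -/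
def s1 : Letter → Word := ![[1], [0], [2, 0]]

/-- The Selmer substitution `s₂ : 1 ↦ 3, 2 ↦ 12, 3 ↦ 1`. -/
def s2 : Letter → Word := ![[2], [0, 1], [0]]

theorem stmt18 (w : Word) :
    applySub s1 (applySub zl w) = applySub zr (applySub c1 w) ∧
    applySub s2 (applySub zr w) = applySub zl (applySub c2 w) := by
  induction w with
  | nil => exact ⟨rfl, rfl⟩
  | cons a t ih =>
    have h : ∀ σ τ l, applySub σ (applySub τ (a :: l)) =
        applySub σ (τ a) ++ applySub σ (applySub τ l) := by
      intro σ τ l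
      simp [applySub, List.flatten_append]
    rw [h, h, h, h, ih.1, ih.2]
    have h1 : applySub s1 (zl a) = applySub zr (c1 a) := by fin_cases a <;> rfl
    have h2 : applySub s2 (zr a) = applySub zl (c2 a) := by fin_cases a <;> rfl
    rw [h1, h2]
    exact ⟨rfl, rfl⟩
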